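/- Let A, B be linear operators in a Hilbert space with dom(A) ⊆ dom(B) and 0 ∉ W_e(B). Then w_e(A,B) ⊆ ⋂_{K compact} closure( w(A + K, B) ), the intersection over all compact K ∈ L(H). -/

import Mathlib

/-! A compact operator `K` maps a weakly null unit sequence `xₙ` to a norm-null one, so
`⟪K xₙ, xₙ⟫ → 0`. Since `0 ∉ W_e(B)`, the values `⟪B xₙ, xₙ⟫` stay away from `0` (a subsequence
tending to `0` would put `0` in `W_e(B)`), hence `⟪K xₙ, xₙ⟫ / ⟪B xₙ, xₙ⟫ → 0` and the quotients
of `A + K`, which lie in `w(A + K, B)`, have the same limit as those of `A`. -/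

open Filter Topology

variable {H : Type*} [NormedAddCommGroup H] [InnerProductSpace ℂ H] [CompleteSpace H]

/-- The numerical range of (the restriction to the domain `d` of) a linear operator `T`. -/
def numRange (T : H →ₗ[ℂ] H) (d : Submodule ℂ H) : Set ℂ :=
  {z | ∃ x ∈ d, ‖x‖ = 1 ∧ z = (inner ℂ (T x) x : ℂ)}

/-- The pencil numerical range `W(A,B) = {λ : 0 ∈ closure (W(A - λB))}`. -/
def pencilW (A B : H →ₗ[ℂ] H) (dA : Submodule ℂ H) : Set ℂ :=
  {lam : ℂ | (0 : ℂ) ∈ closure (numRange (A - lam • B) dA)}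

/-- The pencil numerical range `w(A,B) = {⟨Ax,x⟩/⟨Bx,x⟩ : x ∈ dom A, ⟨Bx,x⟩ ≠ 0}`. -/
def pencilw (A B : H →ₗ[ℂ] H) (dA : Submodule ℂ H) : Set ℂ :=
  {lam : ℂ | ∃ x ∈ dA, (inner ℂ (B x) x : ℂ) ≠ 0 ∧
    lam = (inner ℂ (A x) x : ℂ) / (inner ℂ (B x) x : ℂ)}

/-- The essential numerical range of an operator `T` with domain `d`, via weakly null
normalized sequences. -/
def essNumRange (T : H →ₗ[ℂ] H) (d : Submodule ℂ H) : Set ℂ :=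
  {z | ∃ x : ℕ → H, (∀ n, x n ∈ d) ∧ (∀ n, ‖x n‖ = 1) ∧
    (∀ y : H, Tendsto (fun n => (inner ℂ y (x n) : ℂ)) atTop (𝓝 0)) ∧
    Tendsto (fun n => (inner ℂ (T (x n)) (x n) : ℂ)) atTop (𝓝 z)}

/-- The pencil essential numerical range `W_e(A,B) = {λ : 0 ∈ W_e(A - λB)}`. -/
def pencilWe (A B : H →ₗ[ℂ] H) (dA : Submodule ℂ H) : Set ℂ :=
  {lam : ℂ | (0 : ℂ) ∈ essNumRange (A - lam • B) dA}

/-- The pencil essential numerical range `w_e(A,B)`. -/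
def pencilwe (A B : H →ₗ[ℂ] H) (dA : Submodule ℂ H) : Set ℂ :=
  {lam : ℂ | ∃ x : ℕ → H, (∀ n, x n ∈ dA) ∧ (∀ n, ‖x n‖ = 1) ∧
    (∀ y : H, Tendsto (fun n => (inner ℂ y (x n) : ℂ)) atTop (𝓝 0)) ∧
    (∀ n, (inner ℂ (B (x n)) (x n) : ℂ) ≠ 0) ∧
    Tendsto (fun n => (inner ℂ (A (x n)) (x n) : ℂ) / (inner ℂ (B (x n)) (x n) : ℂ))
      atTop (𝓝 lam)}

theorem tendsto_inner_of_tendsto_zero_of_bounded {𝕜 E : Type*} [RCLike 𝕜] [NormedAddCommGroup E]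
    [InnerProductSpace 𝕜 E] {x u : ℕ → E} {R : ℝ} (hR : ∀ n, ‖x n‖ ≤ R)
    (hu : Tendsto u atTop (𝓝 0)) :
    Tendsto (fun n => (inner 𝕜 (u n) (x n) : 𝕜)) atTop (𝓝 0) := by
  rw [tendsto_zero_iff_norm_tendsto_zero] at hu ⊢
  refine squeeze_zero (fun n => norm_nonneg _) (fun n => ?_) (by simpa using hu.mul_const R)
  calc ‖(inner 𝕜 (u n) (x n) : 𝕜)‖ ≤ ‖u n‖ * ‖x n‖ := norm_inner_le_norm _ _
    _ ≤ ‖u n‖ * R := by gcongr; exact hR n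

theorem IsCompactOperator.tendsto_zero_of_weakly_null {𝕜 E : Type*} [RCLike 𝕜]
    [NormedAddCommGroup E] [InnerProductSpace 𝕜 E] [CompleteSpace E] {K : E →L[𝕜] E}
    (hK : IsCompactOperator K) {x : ℕ → E} {R : ℝ} (hR : ∀ n, ‖x n‖ ≤ R)
    (hweak : ∀ y : E, Tendsto (fun n => (inner 𝕜 y (x n) : 𝕜)) atTop (𝓝 0)) :
    Tendsto (fun n => K (x n)) atTop (𝓝 0) := by
  obtain ⟨C, hC, hKC⟩ := hK.image_ball_subset_compact (𝕜₁ := 𝕜) (f := (K : E →ₗ[𝕜] E)) (R + 1)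
  have hmem : ∀ n, K (x n) ∈ C := fun n =>
    hKC ⟨x n, by simpa [Metric.mem_ball] using (hR n).trans_lt (lt_add_one R), rfl⟩
  refine tendsto_of_subseq_tendsto fun ns hns => ?_
  obtain ⟨y, -, ms, hms, hy⟩ := hC.tendsto_subseq fun n => hmem (ns n)
  -- Every cluster point `y` of `K xₙ` is weakly `0`, as `⟪z, K xₙ⟫ = ⟪K† z, xₙ⟫ → 0`.
  have hy_orth : ∀ z : E, (inner 𝕜 z y : 𝕜) = 0 := fun z =>
    tendsto_nhds_unique (tendsto_const_nhds.inner hy) <| by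
      simpa [ContinuousLinearMap.adjoint_inner_left, Function.comp_def] using
        (hweak (ContinuousLinearMap.adjoint K z)).comp (hns.comp hms.tendsto_atTop)
  rw [inner_self_eq_zero.1 (hy_orth y)] at hy
  exact ⟨ms, hy⟩

set_option linter.unusedSectionVars false

theorem mem_essNumRange_of_mapClusterPt {T : H →ₗ[ℂ] H} {d : Submodule ℂ H} {x : ℕ → H}
    (hxd : ∀ n, x n ∈ d) (hx : ∀ n, ‖x n‖ = 1)
    (hweak : ∀ y : H, Tendsto (fun n => (inner ℂ y (x n) : ℂ)) atTop (𝓝 0)) {z : ℂ}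
    (hz : MapClusterPt z atTop fun n => (inner ℂ (T (x n)) (x n) : ℂ)) :
    z ∈ essNumRange T d := by
  obtain ⟨φ, hφ, hφz⟩ := hz.tendsto_subseq
  exact ⟨x ∘ φ, fun n => hxd (φ n), fun n => hx (φ n),
    fun y => (hweak y).comp hφ.tendsto_atTop, hφz⟩

theorem isBoundedUnder_norm_inv_inner_of_zero_notMem_essNumRange {T : H →ₗ[ℂ] H}
    {d : Submodule ℂ H} (h0 : (0 : ℂ) ∉ essNumRange T d) {x : ℕ → H} (hxd : ∀ n, x n ∈ d)
    (hx : ∀ n, ‖x n‖ = 1)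
    (hweak : ∀ y : H, Tendsto (fun n => (inner ℂ y (x n) : ℂ)) atTop (𝓝 0)) :
    IsBoundedUnder (· ≤ ·) atTop fun n => ‖(inner ℂ (T (x n)) (x n) : ℂ)⁻¹‖ := by
  have hclus := mt (mem_essNumRange_of_mapClusterPt hxd hx hweak) h0
  rw [Metric.nhds_basis_ball.mapClusterPt_iff_frequently] at hclus
  push Not at hclus
  obtain ⟨ε, hε, hfar⟩ := hclus
  refine isBoundedUnder_of_eventually_le (a := ε⁻¹) ?_
  filter_upwards [hfar] with n hn
  rw [norm_inv]
  exact inv_anti₀ hε (by simpa using hn)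

/-- If `0 ∉ W_e(B)`, then `w_e(A,B) ⊆ ⋂_{K compact} closure (w(A + K, B))`. -/
theorem stmt_14 (A B : H →ₗ[ℂ] H) (dA dB : Submodule ℂ H) (hAB : dA ≤ dB)
    (h0 : (0 : ℂ) ∉ essNumRange B dB) :
    pencilwe A B dA ⊆
      ⋂ K ∈ {K : H →L[ℂ] H | IsCompactOperator K},
        closure (pencilw (A + (K : H →ₗ[ℂ] H)) B dA) := by
  rintro lam ⟨x, hxd, hx, hweak, hB, hlim⟩
  refine Set.mem_iInter₂.2 fun K hK => ?_
  have hR : ∀ n, ‖x n‖ ≤ 1 := fun n => (hx n).le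
  have hKx : Tendsto (fun n => (inner ℂ (K (x n)) (x n) : ℂ)) atTop (𝓝 0) :=
    tendsto_inner_of_tendsto_zero_of_bounded hR (hK.tendsto_zero_of_weakly_null hR hweak)
  have hBinv := isBoundedUnder_norm_inv_inner_of_zero_notMem_essNumRange h0
    (fun n => hAB (hxd n)) hx hweak
  have hsum : Tendsto (fun n => (inner ℂ ((A + (K : H →ₗ[ℂ] H)) (x n)) (x n) : ℂ) /
      (inner ℂ (B (x n)) (x n) : ℂ)) atTop (𝓝 lam) := by
    simpa [inner_add_left, add_mul, div_eq_mul_inv] using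
      hlim.add (hKx.zero_mul_isBoundedUnder_le hBinv)
  exact mem_closure_of_tendsto hsum (Eventually.of_forall fun n => ⟨x n, hxd n, hB n, rfl⟩)
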